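/- arXiv:2211.06026 — 13 statements merged into one kernel-verified Lean document; each statement's English description precedes it below -/
import Mathlib

section
/- Let Θ ⊆ ℝ be a nondegenerate open interval, f : Θ → ℝ a function, and y ∈ ℝ. Then y is a level of increase for f if and only if one of the following holds: (i) y < f(t) for all t ∈ Θ; (ii) y > f(t) for all t ∈ Θ; (iii) there exists a point of sign change for the function t ↦ y − f(t). -/
open Set

theorem stmt3 (Θ : Set ℝ) (hopen : IsOpen Θ) (hconn : Θ.OrdConnected) (hnt : Θ.Nontrivial)
    (f : ℝ → ℝ) (y : ℝ) :
    (∀ u ∈ Θ, ∀ v ∈ Θ, u < v → y ≤ f u → y < f v) ↔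
      ((∀ t ∈ Θ, y < f t) ∨ (∀ t ∈ Θ, f t < y) ∨
        ∃ ϑ ∈ Θ, (∀ t ∈ Θ, t < ϑ → 0 < y - f t) ∧ (∀ t ∈ Θ, ϑ < t → y - f t < 0)) := by
  constructor
  · intro h
    by_cases h1 : ∀ t ∈ Θ, y < f t
    · exact Or.inl h1
    by_cases h2 : ∀ t ∈ Θ, f t < y
    · exact Or.inr (Or.inl h2)
    push_neg at h1 h2
    obtain ⟨t₁, ht₁, hft₁⟩ := h1
    obtain ⟨t₀, ht₀, hft₀⟩ := h2
    refine Or.inr (Or.inr ?_)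
    set A : Set ℝ := {t | t ∈ Θ ∧ y ≤ f t} with hA
    have hAne : A.Nonempty := ⟨t₀, ht₀, hft₀⟩
    have hlb : t₁ ∈ lowerBounds A := by
      intro a ha
      by_contra hlt
      push_neg at hlt
      linarith [h a ha.1 t₁ ht₁ hlt ha.2]
    have hbdd : BddBelow A := ⟨t₁, hlb⟩
    set ϑ := sInf A with hϑ
    have hϑ_le : ϑ ≤ t₀ := csInf_le hbdd ⟨ht₀, hft₀⟩
    have hϑ_ge : t₁ ≤ ϑ := le_csInf hAne hlb
    have hϑΘ : ϑ ∈ Θ := hconn.out ht₁ ht₀ ⟨hϑ_ge, hϑ_le⟩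
    refine ⟨ϑ, hϑΘ, ?_, ?_⟩
    · intro t htΘ htϑ
      have : t ∉ A := fun hmem => absurd (csInf_le hbdd hmem) (not_le.mpr htϑ)
      have : ¬ y ≤ f t := fun hy => this ⟨htΘ, hy⟩
      linarith [lt_of_not_ge this]
    · intro t htΘ hϑt
      obtain ⟨a, haA, hat⟩ := exists_lt_of_csInf_lt hAne hϑt
      linarith [h a haA.1 t htΘ hat haA.2]
  · rintro (h | h | ⟨ϑ, hϑΘ, hleft, hright⟩) <;> intro u hu v hv huv hyu
    · exact h v hv
    · exact absurd hyu (not_le.mpr (h u hu))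
    · have hϑu : ϑ ≤ u := by
        by_contra hlt
        push_neg at hlt
        linarith [hleft u hu hlt]
      linarith [hright v hv (lt_of_le_of_lt hϑu huv)]
end

section
/- Let Θ ⊆ ℝ be a nondegenerate open interval and f : Θ → ℝ. If the set of levels of increase for f is dense in the convex hull of the range f(Θ), then f is (weakly) monotone increasing. -/
open Set

theorem stmt4 (Θ : Set ℝ) (hopen : IsOpen Θ) (hconn : Θ.OrdConnected) (hnt : Θ.Nontrivial)
    (f : ℝ → ℝ)
    (hdense : convexHull ℝ (f '' Θ) ⊆
      closure ({y : ℝ | ∀ u ∈ Θ, ∀ v ∈ Θ, u < v → y ≤ f u → y < f v} ∩ convexHull ℝ (f '' Θ))) :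
    MonotoneOn f Θ := by
  intro u hu v hv huv
  rcases eq_or_lt_of_le huv with rfl | hlt
  · exact le_refl _
  by_contra hc
  push_neg at hc
  have hfu : f u ∈ convexHull ℝ (f '' Θ) := subset_convexHull ℝ _ ⟨u, hu, rfl⟩
  have hfv : f v ∈ convexHull ℝ (f '' Θ) := subset_convexHull ℝ _ ⟨v, hv, rfl⟩
  have hm : (f v + f u) / 2 ∈ convexHull ℝ (f '' Θ) :=
    (convex_convexHull ℝ (f '' Θ)).ordConnected.out hfv hfu ⟨by linarith, by linarith⟩
  have hcl := hdense hm
  rw [Metric.mem_closure_iff] at hcl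
  obtain ⟨y, ⟨hy, _⟩, hyd⟩ := hcl ((f u - f v) / 2) (by linarith)
  rw [Real.dist_eq, abs_lt] at hyd
  have h1 : y ≤ f u := by linarith [hyd.1, hyd.2]
  have h2 := hy u hu v hv hlt h1
  linarith [hyd.1]
end

section
/- Let Θ ⊆ ℝ be a nondegenerate open interval, n ∈ ℕ with n ≥ 1, and y₀ < y₁ < ⋯ < yₙ real numbers. Assume y₀, …, y_{n−1} are levels of increase for f : Θ → ℝ and f(Θ) ⊆ [y₀, yₙ]. Then f is strictly ε-increasing with ε := max{y₁ − y₀, …, yₙ − y_{n−1}}, i.e., f(u) < f(v) + ε for all u, v ∈ Θ with u < v. -/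
open Set

/-! `f u` lies between two consecutive levels `y i ≤ f u ≤ y (i+1)` (a discrete intermediate
value argument), and since `y i` is a level of increase, `f v > y i ≥ f u - (y (i+1) - y i)`. -/

def IsLevelOfIncrease {α : Type*} [Preorder α] (Θ : Set α) (f : α → ℝ) (c : ℝ) : Prop :=
  ∀ u ∈ Θ, ∀ v ∈ Θ, u < v → c ≤ f u → c < f v

theorem IsLevelOfIncrease.lt_add_sub {α : Type*} [Preorder α] {Θ : Set α} {f : α → ℝ} {c d : ℝ}
    (hc : IsLevelOfIncrease Θ f c) {u v : α} (hu : u ∈ Θ) (hv : v ∈ Θ) (huv : u < v)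
    (hcu : c ≤ f u) (hud : f u ≤ d) : f u < f v + (d - c) := by
  linarith [hc u hu v hv huv hcu]

theorem Fin.exists_castSucc_le_le_succ {α : Type*} [LinearOrder α] :
    ∀ {n : ℕ} (y : Fin (n + 2) → α) {a : α}, y 0 ≤ a → a ≤ y (Fin.last (n + 1)) →
      ∃ i : Fin (n + 1), y i.castSucc ≤ a ∧ a ≤ y i.succ
  | 0, _, _, h0, hlast => ⟨0, h0, hlast⟩
  | n + 1, y, a, h0, hlast => by
    by_cases hlow : y (Fin.last (n + 1)).castSucc ≤ a
    · exact ⟨Fin.last (n + 1), hlow, hlast⟩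
    · obtain ⟨i, hi⟩ := Fin.exists_castSucc_le_le_succ (y ∘ Fin.castSucc) h0 (le_of_not_ge hlow)
      exact ⟨i.castSucc, hi⟩

theorem stmt7_general (Θ : Set ℝ)
    (n : ℕ) (hn : 1 ≤ n) (y : Fin (n + 1) → ℝ)
    (f : ℝ → ℝ)
    (hlev : ∀ i : Fin n, ∀ u ∈ Θ, ∀ v ∈ Θ, u < v → y i.castSucc ≤ f u → y i.castSucc < f v)
    (hrange : ∀ t ∈ Θ, f t ∈ Set.Icc (y 0) (y (Fin.last n))) :
    ∀ u ∈ Θ, ∀ v ∈ Θ, u < v →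
      f u < f v +
        Finset.univ.sup' (Finset.univ_nonempty_iff.mpr ⟨⟨0, hn⟩⟩)
          (fun i : Fin n => y i.succ - y i.castSucc) := by
  intro u hu v hv huv
  obtain ⟨m, rfl⟩ : ∃ m, n = m + 1 := ⟨n - 1, by omega⟩
  obtain ⟨i, hlow, hhigh⟩ := Fin.exists_castSucc_le_le_succ y (hrange u hu).1 (hrange u hu).2
  calc f u < f v + (y i.succ - y i.castSucc) :=
        IsLevelOfIncrease.lt_add_sub (hlev i) hu hv huv hlow hhigh
    _ ≤ _ := by
        gcongr
        exact Finset.le_sup' (fun j : Fin (m + 1) => y j.succ - y j.castSucc) (Finset.mem_univ i)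

theorem stmt7 (Θ : Set ℝ) (hopen : IsOpen Θ) (hconn : Θ.OrdConnected) (hnt : Θ.Nontrivial)
    (n : ℕ) (hn : 1 ≤ n) (y : Fin (n + 1) → ℝ) (hy : StrictMono y)
    (f : ℝ → ℝ)
    (hlev : ∀ i : Fin n, ∀ u ∈ Θ, ∀ v ∈ Θ, u < v → y i.castSucc ≤ f u → y i.castSucc < f v)
    (hrange : ∀ t ∈ Θ, f t ∈ Set.Icc (y 0) (y (Fin.last n))) :
    ∀ u ∈ Θ, ∀ v ∈ Θ, u < v →
      f u < f v +
        Finset.univ.sup' (Finset.univ_nonempty_iff.mpr ⟨⟨0, hn⟩⟩)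
          (fun i : Fin n => y i.succ - y i.castSucc) :=
  stmt7_general Θ n hn y f hlev hrange
end

section
/- Let Θ ⊆ ℝ be a nondegenerate open interval and f : Θ → ℝ be a function. Then f is ε-increasing (i.e., f(u) ≤ f(v) + ε for all u < v in Θ) if and only if there exists an increasing function g : Θ → ℝ such that sup_{u ∈ Θ} |f(u) − g(u)| ≤ ε/2. -/
/-! Replace `f` by its running supremum `u ↦ sup {f w | w ∈ Θ, w ≤ u}`: it is increasing and,
by ε-increasingness, lies between `f` and `f + ε`, so shifting it down by `ε / 2` gives `g`.
Conversely `f u ≤ g u + ε/2 ≤ g v + ε/2 ≤ f v + ε`. -/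

open Set

variable {α : Type*} [LinearOrder α] {s : Set α} {f g : α → ℝ} {ε : ℝ} {u v : α}

def EpsMonotoneOn (ε : ℝ) (f : α → ℝ) (s : Set α) : Prop :=
  ∀ u ∈ s, ∀ v ∈ s, u < v → f u ≤ f v + ε

noncomputable def runningSup (f : α → ℝ) (s : Set α) (u : α) : ℝ :=
  sSup (f '' (s ∩ Iic u))

theorem image_inter_Iic_nonempty (f : α → ℝ) (hu : u ∈ s) : (f '' (s ∩ Iic u)).Nonempty :=
  ⟨f u, u, ⟨hu, le_rfl⟩, rfl⟩

theorem le_runningSup (hbdd : BddAbove (f '' (s ∩ Iic u))) (hu : u ∈ s) :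
    f u ≤ runningSup f s u :=
  le_csSup hbdd ⟨u, ⟨hu, le_rfl⟩, rfl⟩

namespace EpsMonotoneOn

theorem le_add_of_le (hf : EpsMonotoneOn ε f s) (hε : 0 ≤ ε) (hu : u ∈ s) (hv : v ∈ s)
    (huv : u ≤ v) : f u ≤ f v + ε := by
  rcases huv.lt_or_eq with h | rfl
  · exact hf u hu v hv h
  · linarith

theorem mem_upperBounds_image_inter_Iic (hf : EpsMonotoneOn ε f s) (hε : 0 ≤ ε) (hv : v ∈ s) :
    f v + ε ∈ upperBounds (f '' (s ∩ Iic v)) := by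
  rintro _ ⟨w, ⟨hw, hwv⟩, rfl⟩
  exact hf.le_add_of_le hε hw hv hwv

theorem runningSup_le (hf : EpsMonotoneOn ε f s) (hε : 0 ≤ ε) (hu : u ∈ s) :
    runningSup f s u ≤ f u + ε :=
  csSup_le (image_inter_Iic_nonempty f hu) (hf.mem_upperBounds_image_inter_Iic hε hu)

theorem monotoneOn_runningSup (hf : EpsMonotoneOn ε f s) (hε : 0 ≤ ε) :
    MonotoneOn (runningSup f s) s := fun _ hu _ hv huv =>
  csSup_le_csSup ⟨_, hf.mem_upperBounds_image_inter_Iic hε hv⟩ (image_inter_Iic_nonempty f hu)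
    (image_mono (inter_subset_inter_right _ (Iic_subset_Iic.mpr huv)))

theorem exists_monotoneOn_abs_sub_le (hf : EpsMonotoneOn ε f s) (hε : 0 ≤ ε) :
    ∃ g : α → ℝ, MonotoneOn g s ∧ ∀ u ∈ s, |f u - g u| ≤ ε / 2 := by
  refine ⟨fun u => runningSup f s u - ε / 2,
    fun u hu v hv huv => by simpa using hf.monotoneOn_runningSup hε hu hv huv, fun u hu => ?_⟩
  have hlower := le_runningSup ⟨_, hf.mem_upperBounds_image_inter_Iic hε hu⟩ hu
  have hupper := hf.runningSup_le hε hu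
  rw [abs_le]
  constructor <;> linarith

end EpsMonotoneOn

theorem MonotoneOn.epsMonotoneOn_of_abs_sub_le (hg : MonotoneOn g s)
    (hfg : ∀ u ∈ s, |f u - g u| ≤ ε / 2) : EpsMonotoneOn ε f s := by
  intro u hu v hv huv
  have hu' := abs_le.mp (hfg u hu)
  have hv' := abs_le.mp (hfg v hv)
  linarith [hg hu hv huv.le]

theorem stmt8_general (Θ : Set ℝ) (ε : ℝ) (hε : 0 < ε) (f : ℝ → ℝ) :
    (∀ u ∈ Θ, ∀ v ∈ Θ, u < v → f u ≤ f v + ε) ↔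
      ∃ g : ℝ → ℝ, MonotoneOn g Θ ∧ ∀ u ∈ Θ, |f u - g u| ≤ ε / 2 :=
  ⟨fun hf => EpsMonotoneOn.exists_monotoneOn_abs_sub_le hf hε.le,
    fun ⟨_, hg, hfg⟩ => hg.epsMonotoneOn_of_abs_sub_le hfg⟩

theorem stmt8 (Θ : Set ℝ) (hopen : IsOpen Θ) (hconn : Θ.OrdConnected) (hnt : Θ.Nontrivial)
    (ε : ℝ) (hε : 0 < ε) (f : ℝ → ℝ) :
    (∀ u ∈ Θ, ∀ v ∈ Θ, u < v → f u ≤ f v + ε) ↔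
      ∃ g : ℝ → ℝ, MonotoneOn g Θ ∧ ∀ u ∈ Θ, |f u - g u| ≤ ε / 2 :=
  stmt8_general Θ ε hε f
end

section
/- Let X be a nonempty set, Θ ⊆ ℝ a nondegenerate open interval, and ψ : X × Θ → ℝ a T₁-function with ϑ₁ : X → Θ. Suppose ψ is a T₂^{(λ₁,λ₂)}-function for some λ₁, λ₂ > 0. Then for each x, y ∈ X with ϑ₁(x) < ϑ₁(y), both λ₁/λ₂ and λ₂/λ₁ are levels of increase for the function (ϑ₁(x), ϑ₁(y)) ∋ t ↦ −ψ(x,t)/ψ(y,t). -/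
open Set

theorem stmt10 (X : Type*) [Nonempty X]
    (Θ : Set ℝ) (hopen : IsOpen Θ) (hconn : Θ.OrdConnected) (hnt : Θ.Nontrivial)
    (ψ : X → ℝ → ℝ) (ϑ1 : X → ℝ) (hmap : ∀ x, ϑ1 x ∈ Θ)
    (hT1 : ∀ x, (∀ t ∈ Θ, t < ϑ1 x → 0 < ψ x t) ∧ (∀ t ∈ Θ, ϑ1 x < t → ψ x t < 0))
    (c₁ c₂ : ℝ) (hc₁ : 0 < c₁) (hc₂ : 0 < c₂)
    (hT2 : ∃ ϑ2 : X → X → ℝ, (∀ x y, ϑ2 x y ∈ Θ) ∧ ∀ x y, ∀ t ∈ Θ,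
      (t < ϑ2 x y → 0 < c₁ * ψ x t + c₂ * ψ y t) ∧
      (ϑ2 x y < t → c₁ * ψ x t + c₂ * ψ y t < 0))
    (x y : X) (hxy : ϑ1 x < ϑ1 y) :
    (∀ u ∈ Set.Ioo (ϑ1 x) (ϑ1 y), ∀ v ∈ Set.Ioo (ϑ1 x) (ϑ1 y), u < v →
        c₁ / c₂ ≤ -ψ x u / ψ y u → c₁ / c₂ < -ψ x v / ψ y v) ∧
    (∀ u ∈ Set.Ioo (ϑ1 x) (ϑ1 y), ∀ v ∈ Set.Ioo (ϑ1 x) (ϑ1 y), u < v →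
        c₂ / c₁ ≤ -ψ x u / ψ y u → c₂ / c₁ < -ψ x v / ψ y v) := by
  obtain ⟨ϑ2, hϑ2mem, hϑ2⟩ := hT2
  have hsub : Set.Ioo (ϑ1 x) (ϑ1 y) ⊆ Θ := fun t ht =>
    hconn.out (hmap x) (hmap y) ⟨le_of_lt ht.1, le_of_lt ht.2⟩
  constructor
  · intro u hu v hv huv hle
    have huΘ := hsub hu; have hvΘ := hsub hv
    have hyu : 0 < ψ y u := (hT1 y).1 u huΘ hu.2
    have hyv : 0 < ψ y v := (hT1 y).1 v hvΘ hv.2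
    have h1 : c₁ * ψ y u + c₂ * ψ x u ≤ 0 := by
      rw [div_le_div_iff₀ hc₂ hyu] at hle; nlinarith
    have hθu : ϑ2 y x ≤ u := by
      by_contra h
      push_neg at h
      have := (hϑ2 y x u huΘ).1 h
      linarith
    have hlt : c₁ * ψ y v + c₂ * ψ x v < 0 := (hϑ2 y x v hvΘ).2 (lt_of_le_of_lt hθu huv)
    rw [div_lt_div_iff₀ hc₂ hyv]; nlinarith
  · intro u hu v hv huv hle
    have huΘ := hsub hu; have hvΘ := hsub hv
    have hyu : 0 < ψ y u := (hT1 y).1 u huΘ hu.2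
    have hyv : 0 < ψ y v := (hT1 y).1 v hvΘ hv.2
    have h1 : c₁ * ψ x u + c₂ * ψ y u ≤ 0 := by
      rw [div_le_div_iff₀ hc₁ hyu] at hle; nlinarith
    have hθu : ϑ2 x y ≤ u := by
      by_contra h
      push_neg at h
      have := (hϑ2 x y u huΘ).1 h
      linarith
    have hlt : c₁ * ψ x v + c₂ * ψ y v < 0 := (hϑ2 x y v hvΘ).2 (lt_of_le_of_lt hθu huv)
    rw [div_lt_div_iff₀ hc₁ hyv]; nlinarith
end

section
/- Let X be a nonempty set, Θ ⊆ ℝ a nondegenerate open interval, and ψ : X × Θ → ℝ a T₁-function with ϑ₁ : X → Θ. Suppose that ψ is a T₂^{λ}-function for every weight vector λ = (λ₁, λ₂) with λ₁, λ₂ > 0. Then for each x, y ∈ X with ϑ₁(x) < ϑ₁(y), the function (ϑ₁(x), ϑ₁(y)) ∋ t ↦ −ψ(x,t)/ψ(y,t) is strictly increasing. -/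
open Set

lemma eq_of_eq_zero_of_sign_change {Θ : Set ℝ} {f : ℝ → ℝ} {θ s : ℝ}
    (hpos : ∀ t ∈ Θ, t < θ → 0 < f t) (hneg : ∀ t ∈ Θ, θ < t → f t < 0)
    (hs : s ∈ Θ) (hfs : f s = 0) : s = θ := by
  rcases lt_trichotomy s θ with h | h | h
  · exact absurd hfs (hpos s hs h).ne'
  · exact h
  · exact absurd hfs (hneg s hs h).ne

theorem stmt11_general (X : Type*)
    (Θ : Set ℝ) (hconn : Θ.OrdConnected)
    (ψ : X → ℝ → ℝ) (ϑ1 : X → ℝ) (hmap : ∀ x, ϑ1 x ∈ Θ)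
    (hT1 : ∀ x, (∀ t ∈ Θ, t < ϑ1 x → 0 < ψ x t) ∧ (∀ t ∈ Θ, ϑ1 x < t → ψ x t < 0))
    (hT2 : ∀ c₁ c₂ : ℝ, 0 < c₁ → 0 < c₂ →
      ∃ ϑ2 : X → X → ℝ, (∀ x y, ϑ2 x y ∈ Θ) ∧ ∀ x y, ∀ t ∈ Θ,
        (t < ϑ2 x y → 0 < c₁ * ψ x t + c₂ * ψ y t) ∧
        (ϑ2 x y < t → c₁ * ψ x t + c₂ * ψ y t < 0))
    (x y : X) :
    StrictMonoOn (fun t => -ψ x t / ψ y t) (Set.Ioo (ϑ1 x) (ϑ1 y)) := by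
  have hsub : Ioo (ϑ1 x) (ϑ1 y) ⊆ Θ := Ioo_subset_Icc_self.trans (hconn.out (hmap x) (hmap y))
  intro s hs t ht hst
  have hxs : ψ x s < 0 := (hT1 x).2 s (hsub hs) hs.1
  have hys : 0 < ψ y s := (hT1 y).1 s (hsub hs) hs.2
  have hyt : 0 < ψ y t := (hT1 y).1 t (hsub ht) ht.2
  set c := -ψ x s / ψ y s
  obtain ⟨ϑ2, -, hϑ2⟩ := hT2 1 c one_pos (div_pos (neg_pos.mpr hxs) hys)
  -- `c` is chosen so that `ψ x + c • ψ y` vanishes at `s`, which pins its sign change there.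
  have hs_eq : s = ϑ2 x y :=
    eq_of_eq_zero_of_sign_change (fun u hu => (hϑ2 x y u hu).1) (fun u hu => (hϑ2 x y u hu).2)
      (hsub hs) (by simp only [c, one_mul, div_mul_cancel₀ _ hys.ne', add_neg_cancel])
  have hneg : 1 * ψ x t + c * ψ y t < 0 := (hϑ2 x y t (hsub ht)).2 (hs_eq ▸ hst)
  show c < -ψ x t / ψ y t
  rw [lt_div_iff₀ hyt]
  linarith

theorem stmt11 (X : Type*) [Nonempty X]
    (Θ : Set ℝ) (hopen : IsOpen Θ) (hconn : Θ.OrdConnected) (hnt : Θ.Nontrivial)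
    (ψ : X → ℝ → ℝ) (ϑ1 : X → ℝ) (hmap : ∀ x, ϑ1 x ∈ Θ)
    (hT1 : ∀ x, (∀ t ∈ Θ, t < ϑ1 x → 0 < ψ x t) ∧ (∀ t ∈ Θ, ϑ1 x < t → ψ x t < 0))
    (hT2 : ∀ c₁ c₂ : ℝ, 0 < c₁ → 0 < c₂ →
      ∃ ϑ2 : X → X → ℝ, (∀ x y, ϑ2 x y ∈ Θ) ∧ ∀ x y, ∀ t ∈ Θ,
        (t < ϑ2 x y → 0 < c₁ * ψ x t + c₂ * ψ y t) ∧
        (ϑ2 x y < t → c₁ * ψ x t + c₂ * ψ y t < 0))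
    (x y : X) (hxy : ϑ1 x < ϑ1 y) :
    StrictMonoOn (fun t => -ψ x t / ψ y t) (Set.Ioo (ϑ1 x) (ϑ1 y)) :=
  stmt11_general X Θ hconn ψ ϑ1 hmap hT1 hT2 x y
end

section
/- Let X be a nonempty set, Θ ⊆ ℝ a nondegenerate open interval, and ψ : X × Θ → ℝ a T₁-function with ϑ₁ : X → Θ. If for each x ∈ X the function t ↦ ψ(x,t) is decreasing on Θ, then for each x, y ∈ X with ϑ₁(x) < ϑ₁(y), the function (ϑ₁(x), ϑ₁(y)) ∋ t ↦ −ψ(x,t)/ψ(y,t) is increasing; if each t ↦ ψ(x,t) is strictly decreasing, then this quotient function is strictly increasing. -/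
open Set

section QuotientMonotone

variable {α 𝕜 : Type*} [Preorder α] [Field 𝕜] [LinearOrder 𝕜] [IsStrictOrderedRing 𝕜]
  {f g : α → 𝕜} {s : Set α}

theorem AntitoneOn.monotoneOn_neg_div (hf : AntitoneOn f s) (hg : AntitoneOn g s)
    (hf0 : ∀ t ∈ s, f t ≤ 0) (hg0 : ∀ t ∈ s, 0 < g t) :
    MonotoneOn (fun t => -f t / g t) s := fun _ ha _ hb hab =>
  div_le_div₀ (neg_nonneg.2 (hf0 _ hb)) (neg_le_neg (hf ha hb hab)) (hg0 _ hb) (hg ha hb hab)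

theorem StrictAntiOn.strictMonoOn_neg_div (hf : StrictAntiOn f s) (hg : AntitoneOn g s)
    (hf0 : ∀ t ∈ s, f t ≤ 0) (hg0 : ∀ t ∈ s, 0 < g t) :
    StrictMonoOn (fun t => -f t / g t) s := fun _ ha _ hb hab =>
  div_lt_div₀ (neg_lt_neg (hf ha hb hab)) (hg ha hb hab.le) (neg_nonneg.2 (hf0 _ hb)) (hg0 _ hb)

end QuotientMonotone

theorem stmt12_general (X : Type*)
    (Θ : Set ℝ) (hconn : Θ.OrdConnected)
    (ψ : X → ℝ → ℝ) (ϑ1 : X → ℝ) (hmap : ∀ x, ϑ1 x ∈ Θ)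
    (hT1 : ∀ x, (∀ t ∈ Θ, t < ϑ1 x → 0 < ψ x t) ∧ (∀ t ∈ Θ, ϑ1 x < t → ψ x t < 0)) :
    ((∀ x, AntitoneOn (ψ x) Θ) → ∀ x y : X, ϑ1 x < ϑ1 y →
      MonotoneOn (fun t => -ψ x t / ψ y t) (Set.Ioo (ϑ1 x) (ϑ1 y))) ∧
    ((∀ x, StrictAntiOn (ψ x) Θ) → ∀ x y : X, ϑ1 x < ϑ1 y →
      StrictMonoOn (fun t => -ψ x t / ψ y t) (Set.Ioo (ϑ1 x) (ϑ1 y))) := by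
  have hsub : ∀ x y, Ioo (ϑ1 x) (ϑ1 y) ⊆ Θ := fun x y =>
    Ioo_subset_Icc_self.trans (hconn.out (hmap x) (hmap y))
  have hneg : ∀ x y, ∀ t ∈ Ioo (ϑ1 x) (ϑ1 y), ψ x t ≤ 0 := fun x y t ht =>
    ((hT1 x).2 t (hsub x y ht) ht.1).le
  have hpos : ∀ x y, ∀ t ∈ Ioo (ϑ1 x) (ϑ1 y), 0 < ψ y t := fun x y t ht =>
    (hT1 y).1 t (hsub x y ht) ht.2
  refine ⟨fun hanti x y _ => ?_, fun hanti x y _ => ?_⟩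
  · exact ((hanti x).mono (hsub x y)).monotoneOn_neg_div ((hanti y).mono (hsub x y))
      (hneg x y) (hpos x y)
  · exact ((hanti x).mono (hsub x y)).strictMonoOn_neg_div
      ((hanti y).antitoneOn.mono (hsub x y)) (hneg x y) (hpos x y)

theorem stmt12 (X : Type*) [Nonempty X]
    (Θ : Set ℝ) (hopen : IsOpen Θ) (hconn : Θ.OrdConnected) (hnt : Θ.Nontrivial)
    (ψ : X → ℝ → ℝ) (ϑ1 : X → ℝ) (hmap : ∀ x, ϑ1 x ∈ Θ)
    (hT1 : ∀ x, (∀ t ∈ Θ, t < ϑ1 x → 0 < ψ x t) ∧ (∀ t ∈ Θ, ϑ1 x < t → ψ x t < 0)) :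
    ((∀ x, AntitoneOn (ψ x) Θ) → ∀ x y : X, ϑ1 x < ϑ1 y →
      MonotoneOn (fun t => -ψ x t / ψ y t) (Set.Ioo (ϑ1 x) (ϑ1 y))) ∧
    ((∀ x, StrictAntiOn (ψ x) Θ) → ∀ x y : X, ϑ1 x < ϑ1 y →
      StrictMonoOn (fun t => -ψ x t / ψ y t) (Set.Ioo (ϑ1 x) (ϑ1 y))) :=
  stmt12_general X Θ hconn ψ ϑ1 hmap hT1
end

section
/- Let X be a nonempty set, Θ ⊆ ℝ a nondegenerate open interval, and ψ : X × Θ → ℝ a T₁-function with ϑ₁ : X → Θ such that for each x ∈ X the function t ↦ ψ(x,t) is strictly decreasing on Θ. Then for every n ≥ 1, every (x₁,…,xₙ) ∈ Xⁿ and every (λ₁,…,λₙ) ∈ ℝ₊ⁿ \ {0}, the function t ↦ Σᵢ λᵢ ψ(xᵢ,t) has a point of sign change in Θ, i.e., ψ is a Tₙ^{λ}-function. -/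
open Set

theorem stmt13 (X : Type*) [Nonempty X]
    (Θ : Set ℝ) (hopen : IsOpen Θ) (hconn : Θ.OrdConnected) (hnt : Θ.Nontrivial)
    (ψ : X → ℝ → ℝ) (ϑ1 : X → ℝ) (hmap : ∀ x, ϑ1 x ∈ Θ)
    (hT1 : ∀ x, (∀ t ∈ Θ, t < ϑ1 x → 0 < ψ x t) ∧ (∀ t ∈ Θ, ϑ1 x < t → ψ x t < 0))
    (hanti : ∀ x, StrictAntiOn (ψ x) Θ) :
    ∀ n : ℕ, 1 ≤ n → ∀ x : Fin n → X, ∀ c : Fin n → ℝ, (∀ i, 0 ≤ c i) → c ≠ 0 →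
      ∃ ϑ ∈ Θ, (∀ t ∈ Θ, t < ϑ → 0 < ∑ i, c i * ψ (x i) t) ∧
               (∀ t ∈ Θ, ϑ < t → ∑ i, c i * ψ (x i) t < 0) := by
  intro n hn x c hc hcne
  haveI : NeZero n := ⟨by omega⟩
  set g : ℝ → ℝ := fun t => ∑ i, c i * ψ (x i) t with hg
  obtain ⟨j, hj⟩ : ∃ j, 0 < c j := by
    obtain ⟨j, hj⟩ := Function.ne_iff.mp hcne
    exact ⟨j, lt_of_le_of_ne (hc j) (Ne.symm hj)⟩
  -- g is strictly decreasing on Θ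
  have hganti : ∀ s ∈ Θ, ∀ t ∈ Θ, s < t → g t < g s := by
    intro s hs t ht hst
    apply Finset.sum_lt_sum
    · intro i _
      exact mul_le_mul_of_nonneg_left (le_of_lt (hanti (x i) hs ht hst)) (hc i)
    · exact ⟨j, Finset.mem_univ j, mul_lt_mul_of_pos_left (hanti (x j) hs ht hst) hj⟩
  -- find a ∈ Θ with g a > 0
  have hne : (Finset.univ : Finset (Fin n)).Nonempty := Finset.univ_nonempty
  set m := Finset.univ.inf' hne (fun i => ϑ1 (x i)) with hm
  have hmΘ : m ∈ Θ := by
    obtain ⟨k, _, hk⟩ := Finset.exists_mem_eq_inf' hne (fun i => ϑ1 (x i))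
    rw [hm, hk]; exact hmap (x k)
  obtain ⟨ε, hε, hball⟩ := Metric.isOpen_iff.mp hopen m hmΘ
  have haΘ : m - ε/2 ∈ Θ := by
    apply hball
    rw [Metric.mem_ball, Real.dist_eq, abs_lt]
    constructor <;> linarith
  have hga : 0 < g (m - ε/2) := by
    apply Finset.sum_pos'
    · intro i _
      apply mul_nonneg (hc i)
      apply le_of_lt ((hT1 (x i)).1 _ haΘ _)
      have : m ≤ ϑ1 (x i) := Finset.inf'_le _ (Finset.mem_univ i)
      linarith
    · refine ⟨j, Finset.mem_univ j, mul_pos hj ((hT1 (x j)).1 _ haΘ ?_)⟩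
      have : m ≤ ϑ1 (x j) := Finset.inf'_le _ (Finset.mem_univ j)
      linarith
  -- find b ∈ Θ with g b < 0
  set M := Finset.univ.sup' hne (fun i => ϑ1 (x i)) with hM
  have hMΘ : M ∈ Θ := by
    obtain ⟨k, _, hk⟩ := Finset.exists_mem_eq_sup' hne (fun i => ϑ1 (x i))
    rw [hM, hk]; exact hmap (x k)
  obtain ⟨δ, hδ, hball'⟩ := Metric.isOpen_iff.mp hopen M hMΘ
  have hbΘ : M + δ/2 ∈ Θ := by
    apply hball'
    rw [Metric.mem_ball, Real.dist_eq, abs_lt]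
    constructor <;> linarith
  have hgb : g (M + δ/2) < 0 := by
    apply Finset.sum_neg'
    · intro i _
      apply mul_nonpos_of_nonneg_of_nonpos (hc i)
      apply le_of_lt ((hT1 (x i)).2 _ hbΘ _)
      have : ϑ1 (x i) ≤ M := Finset.le_sup' (fun i => ϑ1 (x i)) (Finset.mem_univ i)
      linarith
    · refine ⟨j, Finset.mem_univ j, mul_neg_of_pos_of_neg hj ((hT1 (x j)).2 _ hbΘ ?_)⟩
      have : ϑ1 (x j) ≤ M := Finset.le_sup' (fun i => ϑ1 (x i)) (Finset.mem_univ j)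
      linarith
  set a := m - ε/2
  set b := M + δ/2
  set S : Set ℝ := {t ∈ Θ | 0 < g t} with hS
  have haS : a ∈ S := ⟨haΘ, hga⟩
  have hub : ∀ s ∈ S, s ≤ b := by
    intro s hs
    by_contra hsb
    push_neg at hsb
    exact absurd (hganti _ hbΘ _ hs.1 hsb) (by linarith [hs.2, hgb])
  have hbdd : BddAbove S := ⟨b, hub⟩
  set ϑ := sSup S with hϑ
  have haϑ : a ≤ ϑ := le_csSup hbdd haS
  have hϑb : ϑ ≤ b := csSup_le ⟨a, haS⟩ hub
  have hϑΘ : ϑ ∈ Θ := hconn.out haΘ hbΘ ⟨haϑ, hϑb⟩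
  refine ⟨ϑ, hϑΘ, ?_, ?_⟩
  · intro t ht htϑ
    obtain ⟨s, hsS, hts⟩ := exists_lt_of_lt_csSup ⟨a, haS⟩ htϑ
    exact lt_trans hsS.2 (hganti _ ht _ hsS.1 hts)
  · intro t ht hϑt
    by_contra hgt
    push_neg at hgt
    set u := (ϑ + t)/2 with hu
    have hu1 : ϑ < u := by rw [hu]; linarith
    have hu2 : u < t := by rw [hu]; linarith
    have huΘ : u ∈ Θ := hconn.out hϑΘ ht ⟨hu1.le, hu2.le⟩
    have : u ∈ S := ⟨huΘ, lt_of_le_of_lt hgt (hganti _ huΘ _ ht hu2)⟩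
    exact absurd (le_csSup hbdd this) (not_le.mpr hu1)
end

section
/- Let X be a nonempty set, Θ ⊆ ℝ a nondegenerate open interval, ψ : X × Θ → ℝ, n ∈ ℕ, and λ = (λ₁,…,λₙ) ∈ Λₙ. Suppose ψ is a Tₙ^{λ}-function. Let m ∈ {1,…,n} and H₁,…,Hₘ be nonempty pairwise disjoint subsets of {1,…,n} with H₁ ∪ ⋯ ∪ Hₘ = {1,…,n}, and set μ_α := Σ_{i ∈ H_α} λᵢ for α ∈ {1,…,m}. Then μ = (μ₁,…,μₘ) ∈ Λₘ and ψ is a Tₘ^{μ}-function. -/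
open Set

theorem stmt14 (X : Type*) [Nonempty X]
    (Θ : Set ℝ) (hopen : IsOpen Θ) (hconn : Θ.OrdConnected) (hnt : Θ.Nontrivial)
    (ψ : X → ℝ → ℝ)
    (n : ℕ) (c : Fin n → ℝ) (hc0 : ∀ i, 0 ≤ c i) (hcne : c ≠ 0)
    (hTn : ∃ ϑ : (Fin n → X) → ℝ, (∀ x, ϑ x ∈ Θ) ∧ ∀ x : Fin n → X, ∀ t ∈ Θ,
      (t < ϑ x → 0 < ∑ i, c i * ψ (x i) t) ∧ (ϑ x < t → ∑ i, c i * ψ (x i) t < 0))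
    (m : ℕ) (hm1 : 1 ≤ m) (hmn : m ≤ n)
    (H : Fin m → Finset (Fin n)) (hne : ∀ α, (H α).Nonempty)
    (hdisj : ∀ α β, α ≠ β → Disjoint (H α) (H β))
    (hcover : ∀ i : Fin n, ∃ α, i ∈ H α) :
    ((∀ α, 0 ≤ ∑ i ∈ H α, c i) ∧ (fun α => ∑ i ∈ H α, c i) ≠ 0) ∧
    ∃ ϑm : (Fin m → X) → ℝ, (∀ y, ϑm y ∈ Θ) ∧ ∀ y : Fin m → X, ∀ t ∈ Θ,
      (t < ϑm y → 0 < ∑ α, (∑ i ∈ H α, c i) * ψ (y α) t) ∧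
      (ϑm y < t → ∑ α, (∑ i ∈ H α, c i) * ψ (y α) t < 0) := by
  classical
  obtain ⟨ϑ, hϑΘ, hϑ⟩ := hTn
  -- fiber map
  choose f hf using hcover
  have hfiber : ∀ i α, i ∈ H α ↔ f i = α := by
    intro i α
    constructor
    · intro hi
      by_contra hne'
      exact (Finset.disjoint_left.mp (hdisj (f i) α hne') (hf i)) hi
    · rintro rfl; exact hf i
  have hkey : ∀ (y : Fin m → X) (t : ℝ),
      ∑ α, (∑ i ∈ H α, c i) * ψ (y α) t = ∑ i, c i * ψ ((y ∘ f) i) t := by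
    intro y t
    rw [← Finset.sum_fiberwise (g := f) (s := Finset.univ)
      (f := fun i => c i * ψ ((y ∘ f) i) t)]
    refine Finset.sum_congr rfl fun α _ => ?_
    rw [Finset.sum_mul]
    refine Finset.sum_congr ?_ fun i hi => ?_
    · ext i; simp [hfiber i α]
    · simp only [Finset.mem_filter] at hi
      simp [Function.comp, hi.2]
  constructor
  · constructor
    · intro α; exact Finset.sum_nonneg fun i _ => hc0 i
    · intro h
      obtain ⟨i, hi⟩ : ∃ i, c i ≠ 0 := by
        by_contra h'; push_neg at h'; exact hcne (funext h')
      have hpos : 0 < c i := lt_of_le_of_ne (hc0 i) (Ne.symm hi)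
      have : 0 < ∑ j ∈ H (f i), c j :=
        Finset.sum_pos' (fun j _ => hc0 j) ⟨i, hf i, hpos⟩
      have h0 : ∑ j ∈ H (f i), c j = 0 := by simpa using congrFun h (f i)
      exact this.ne' h0
  · refine ⟨fun y => ϑ (y ∘ f), fun y => hϑΘ _, fun y t ht => ?_⟩
    rw [hkey y t]
    exact hϑ (y ∘ f) t ht
end

section
/- Let X be a nonempty set, Θ ⊆ ℝ a nondegenerate open interval, and ψ : X × Θ → ℝ. If ψ is a Tₙ-function for some n ∈ ℕ and m ∈ {1,…,n} divides n, then ψ is a Tₘ-function. -/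
open Set

theorem stmt15 (X : Type*) [Nonempty X]
    (Θ : Set ℝ) (hopen : IsOpen Θ) (hconn : Θ.OrdConnected) (hnt : Θ.Nontrivial)
    (ψ : X → ℝ → ℝ) (n : ℕ)
    (hTn : ∃ ϑ : (Fin n → X) → ℝ, (∀ x, ϑ x ∈ Θ) ∧ ∀ x : Fin n → X, ∀ t ∈ Θ,
      (t < ϑ x → 0 < ∑ i, ψ (x i) t) ∧ (ϑ x < t → ∑ i, ψ (x i) t < 0))
    (m : ℕ) (hm1 : 1 ≤ m) (hmn : m ≤ n) (hdvd : m ∣ n) :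
    ∃ ϑm : (Fin m → X) → ℝ, (∀ y, ϑm y ∈ Θ) ∧ ∀ y : Fin m → X, ∀ t ∈ Θ,
      (t < ϑm y → 0 < ∑ α, ψ (y α) t) ∧ (ϑm y < t → ∑ α, ψ (y α) t < 0) := by
  obtain ⟨ϑ, hϑΘ, hϑ⟩ := hTn
  obtain ⟨k, rfl⟩ := hdvd
  have hm0 : 0 < m := hm1
  have hk0 : 0 < k := by
    rcases Nat.eq_zero_or_pos k with h | h
    · subst h; simp at hmn; omega
    · exact h
  -- extend an m-tuple to an (m*k)-tuple by repetition
  set ext : (Fin m → X) → (Fin (m * k) → X) :=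
    fun y i => y ⟨i.val / k, by
      have := i.isLt
      exact Nat.div_lt_of_lt_mul (by calc i.val < m * k := this
        _ = k * m := mul_comm m k)⟩ with hext
  have hsum : ∀ (y : Fin m → X) (t : ℝ),
      ∑ i, ψ (ext y i) t = k * ∑ α, ψ (y α) t := by
    intro y t
    rw [← finProdFinEquiv.sum_comp (fun i => ψ (ext y i) t)]
    rw [Fintype.sum_prod_type]
    have : ∀ (a : Fin m) (b : Fin k),
        ψ (ext y (finProdFinEquiv (a, b))) t = ψ (y a) t := by
      intro a b
      congr 1
      simp only [hext]
      congr 1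
      have hv : (finProdFinEquiv (a, b) : Fin (m * k)).val = b.val + k * a.val :=
        finProdFinEquiv_apply_val (a, b)
      ext
      simp only [hv]
      rw [Nat.add_mul_div_left _ _ hk0, Nat.div_eq_of_lt b.isLt, Nat.zero_add]
    simp_rw [this]
    rw [Finset.sum_comm]
    simp [Finset.sum_const, mul_comm]
  refine ⟨fun y => ϑ (ext y), fun y => hϑΘ _, fun y t ht => ?_⟩
  have hkpos : (0 : ℝ) < k := by exact_mod_cast hk0
  constructor
  · intro hlt
    have := (hϑ (ext y) t ht).1 hlt
    rw [hsum] at this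
    nlinarith
  · intro hlt
    have := (hϑ (ext y) t ht).2 hlt
    rw [hsum] at this
    nlinarith
end

section
/- Let X be a nonempty set, Θ ⊆ ℝ a nondegenerate open interval, f : Θ → ℝ strictly increasing, p : X → (0,∞), φ : X → conv(f(Θ)), and define ψ(x,t) := p(x)(φ(x) − f(t)). Then for every n ≥ 1, (x₁,…,xₙ) ∈ Xⁿ and (λ₁,…,λₙ) ∈ Λₙ, the function t ↦ Σᵢ λᵢ ψ(xᵢ,t) has a point of sign change in Θ, and this point equals f^{(−1)}((Σᵢ λᵢ p(xᵢ) φ(xᵢ)) / (Σᵢ λᵢ p(xᵢ))), where f^{(−1)} : conv(f(Θ)) → Θ is the generalized left inverse of f. -/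
/-!
Writing `w i = c i * p (x i)` and `S = ∑ w i > 0`, the function is
`t ↦ S * (y - f t)` with `y = (∑ w i * φ (x i)) / S`, a convex combination of the `φ (x i)`, so `y`
lies between two values `f a ≤ y ≤ f b` with `a, b ∈ Θ`. Hence `{u ∈ Θ | f u ≤ y}` is nonempty and
bounded by `b`, its supremum lies in `[a, b] ⊆ Θ`, and strict monotonicity of `f` puts `f t` below `y`
to the left of the supremum and above `y` to the right of it.
-/

open Set

section LinearOrderedField

variable {𝕜 : Type*} [Field 𝕜] [LinearOrder 𝕜] [IsStrictOrderedRing 𝕜]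

theorem exists_le_le_of_mem_convexHull {A : Set 𝕜} {y : 𝕜} (hy : y ∈ convexHull 𝕜 A) :
    ∃ a ∈ A, ∃ b ∈ A, a ≤ y ∧ y ≤ b := by
  have hconn : OrdConnected {z : 𝕜 | ∃ a ∈ A, ∃ b ∈ A, a ≤ z ∧ z ≤ b} :=
    ⟨by
      rintro _ ⟨a, ha, -, -, ha', -⟩ _ ⟨-, -, b, hb, -, hb'⟩ _ ⟨hz₁, hz₂⟩
      exact ⟨a, ha, b, hb, ha'.trans hz₁, hz₂.trans hb'⟩⟩
  refine convexHull_min ?_ hconn.convex hy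
  exact fun a ha => ⟨a, ha, a, ha, le_rfl, le_rfl⟩

theorem Convex.sum_mul_div_sum_mem {ι : Type*} {A : Set 𝕜} (hA : Convex 𝕜 A) (s : Finset ι)
    {w z : ι → 𝕜} (hw : ∀ i ∈ s, 0 ≤ w i) (hws : 0 < ∑ i ∈ s, w i) (hz : ∀ i ∈ s, z i ∈ A) :
    (∑ i ∈ s, w i * z i) / ∑ i ∈ s, w i ∈ A := by
  simpa only [Finset.centerMass, smul_eq_mul, div_eq_inv_mul] using hA.centerMass_mem hw hws hz

end LinearOrderedField

theorem Finset.sum_mul_sub_eq_sum_mul_sub_div {ι K : Type*} [Field K] (s : Finset ι) (w v : ι → K)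
    (r : K) (hws : ∑ i ∈ s, w i ≠ 0) :
    ∑ i ∈ s, w i * (v i - r) = (∑ i ∈ s, w i) * ((∑ i ∈ s, w i * v i) / ∑ i ∈ s, w i - r) := by
  rw [mul_sub, mul_div_cancel₀ _ hws, Finset.sum_mul]
  simp only [mul_sub, Finset.sum_sub_distrib]

noncomputable def generalizedLeftInv (f : ℝ → ℝ) (Θ : Set ℝ) (y : ℝ) : ℝ :=
  sSup {u | u ∈ Θ ∧ f u ≤ y}

section GeneralizedLeftInv

variable {f : ℝ → ℝ} {Θ : Set ℝ} {y : ℝ}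

theorem exists_le_le_of_mem_convexHull_image (hy : y ∈ convexHull ℝ (f '' Θ)) :
    ∃ a ∈ Θ, ∃ b ∈ Θ, f a ≤ y ∧ y ≤ f b := by
  obtain ⟨_, ⟨a, ha, rfl⟩, _, ⟨b, hb, rfl⟩, hay, hyb⟩ := exists_le_le_of_mem_convexHull hy
  exact ⟨a, ha, b, hb, hay, hyb⟩

theorem nonempty_sublevel_of_mem_convexHull_image (hy : y ∈ convexHull ℝ (f '' Θ)) :
    {u | u ∈ Θ ∧ f u ≤ y}.Nonempty :=
  let ⟨a, ha, _, _, hay, _⟩ := exists_le_le_of_mem_convexHull_image hy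
  ⟨a, ha, hay⟩

theorem StrictMonoOn.le_of_mem_sublevel (hf : StrictMonoOn f Θ) {b u : ℝ} (hb : b ∈ Θ)
    (hyb : y ≤ f b) (hu : u ∈ {u | u ∈ Θ ∧ f u ≤ y}) : u ≤ b :=
  (hf.le_iff_le hu.1 hb).1 (hu.2.trans hyb)

theorem StrictMonoOn.bddAbove_sublevel (hf : StrictMonoOn f Θ)
    (hy : y ∈ convexHull ℝ (f '' Θ)) : BddAbove {u | u ∈ Θ ∧ f u ≤ y} :=
  let ⟨_, _, b, hb, _, hyb⟩ := exists_le_le_of_mem_convexHull_image hy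
  ⟨b, fun _ => hf.le_of_mem_sublevel hb hyb⟩

theorem StrictMonoOn.generalizedLeftInv_mem (hΘ : Θ.OrdConnected) (hf : StrictMonoOn f Θ)
    (hy : y ∈ convexHull ℝ (f '' Θ)) : generalizedLeftInv f Θ y ∈ Θ := by
  obtain ⟨a, ha, b, hb, hay, hyb⟩ := exists_le_le_of_mem_convexHull_image hy
  exact hΘ.out ha hb ⟨le_csSup (hf.bddAbove_sublevel hy) ⟨ha, hay⟩,
    csSup_le (nonempty_sublevel_of_mem_convexHull_image hy) fun _ => hf.le_of_mem_sublevel hb hyb⟩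

theorem StrictMonoOn.lt_of_lt_generalizedLeftInv (hf : StrictMonoOn f Θ)
    (hy : y ∈ convexHull ℝ (f '' Θ)) {t : ℝ} (ht : t ∈ Θ) (hlt : t < generalizedLeftInv f Θ y) :
    f t < y := by
  obtain ⟨u, ⟨hu, huy⟩, htu⟩ :=
    exists_lt_of_lt_csSup (nonempty_sublevel_of_mem_convexHull_image hy) hlt
  exact (hf ht hu htu).trans_le huy

theorem StrictMonoOn.lt_of_generalizedLeftInv_lt (hf : StrictMonoOn f Θ)
    (hy : y ∈ convexHull ℝ (f '' Θ)) {t : ℝ} (ht : t ∈ Θ) (hlt : generalizedLeftInv f Θ y < t) :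
    y < f t :=
  lt_of_not_ge fun hty => (le_csSup (hf.bddAbove_sublevel hy) ⟨ht, hty⟩).not_gt hlt

end GeneralizedLeftInv

theorem stmt16_general (X : Type*)
    (Θ : Set ℝ) (hconn : Θ.OrdConnected)
    (f : ℝ → ℝ) (hf : StrictMonoOn f Θ)
    (p φ : X → ℝ) (hp : ∀ x, 0 < p x) (hφ : ∀ x, φ x ∈ convexHull ℝ (f '' Θ))
    (ψ : X → ℝ → ℝ) (hψ : ∀ x t, ψ x t = p x * (φ x - f t)) :
    ∀ n : ℕ, 1 ≤ n → ∀ x : Fin n → X, ∀ c : Fin n → ℝ, (∀ i, 0 ≤ c i) → c ≠ 0 →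
      sSup {u | u ∈ Θ ∧
          f u ≤ (∑ i, c i * p (x i) * φ (x i)) / (∑ i, c i * p (x i))} ∈ Θ ∧
      (∀ t ∈ Θ, t < sSup {u | u ∈ Θ ∧
          f u ≤ (∑ i, c i * p (x i) * φ (x i)) / (∑ i, c i * p (x i))} →
        0 < ∑ i, c i * ψ (x i) t) ∧
      (∀ t ∈ Θ, sSup {u | u ∈ Θ ∧
          f u ≤ (∑ i, c i * p (x i) * φ (x i)) / (∑ i, c i * p (x i))} < t →
        ∑ i, c i * ψ (x i) t < 0) := by
  intro n _ x c hc hc0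
  have hw : ∀ i ∈ Finset.univ, 0 ≤ c i * p (x i) := fun i _ => mul_nonneg (hc i) (hp (x i)).le
  have hS : 0 < ∑ i, c i * p (x i) := by
    obtain ⟨j, hj⟩ := Function.ne_iff.1 hc0
    exact Finset.sum_pos' hw ⟨j, Finset.mem_univ j, mul_pos ((hc j).lt_of_ne' hj) (hp (x j))⟩
  have hy := (convex_convexHull ℝ _).sum_mul_div_sum_mem _ hw hS fun i _ => hφ (x i)
  have hsum (t : ℝ) : ∑ i, c i * ψ (x i) t = (∑ i, c i * p (x i)) *
      ((∑ i, c i * p (x i) * φ (x i)) / (∑ i, c i * p (x i)) - f t) := by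
    simp only [hψ, ← mul_assoc]
    exact Finset.univ.sum_mul_sub_eq_sum_mul_sub_div _ _ _ hS.ne'
  refine ⟨hf.generalizedLeftInv_mem hconn hy, fun t ht hlt => ?_, fun t ht hlt => ?_⟩
  · rw [hsum]
    exact mul_pos hS (sub_pos.2 (hf.lt_of_lt_generalizedLeftInv hy ht hlt))
  · rw [hsum]
    exact mul_neg_of_pos_of_neg hS (sub_neg.2 (hf.lt_of_generalizedLeftInv_lt hy ht hlt))

theorem stmt16 (X : Type*) [Nonempty X]
    (Θ : Set ℝ) (hopen : IsOpen Θ) (hconn : Θ.OrdConnected) (hnt : Θ.Nontrivial)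
    (f : ℝ → ℝ) (hf : StrictMonoOn f Θ)
    (p φ : X → ℝ) (hp : ∀ x, 0 < p x) (hφ : ∀ x, φ x ∈ convexHull ℝ (f '' Θ))
    (ψ : X → ℝ → ℝ) (hψ : ∀ x t, ψ x t = p x * (φ x - f t)) :
    ∀ n : ℕ, 1 ≤ n → ∀ x : Fin n → X, ∀ c : Fin n → ℝ, (∀ i, 0 ≤ c i) → c ≠ 0 →
      sSup {u | u ∈ Θ ∧
          f u ≤ (∑ i, c i * p (x i) * φ (x i)) / (∑ i, c i * p (x i))} ∈ Θ ∧
      (∀ t ∈ Θ, t < sSup {u | u ∈ Θ ∧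
          f u ≤ (∑ i, c i * p (x i) * φ (x i)) / (∑ i, c i * p (x i))} →
        0 < ∑ i, c i * ψ (x i) t) ∧
      (∀ t ∈ Θ, sSup {u | u ∈ Θ ∧
          f u ≤ (∑ i, c i * p (x i) * φ (x i)) / (∑ i, c i * p (x i))} < t →
        ∑ i, c i * ψ (x i) t < 0) :=
  stmt16_general X Θ hconn f hf p φ hp hφ ψ hψ
end

section
/- Let ψ : ℝ × ℝ → ℝ be defined for a fixed α ∈ (0,1) by ψ(x,t) = α if x > t, ψ(x,t) = 0 if x = t, and ψ(x,t) = α − 1 if x < t. For n ≥ 2, ψ is a Tₙ-function (i.e., for every (x₁,…,xₙ) ∈ ℝⁿ the function t ↦ Σᵢ ψ(xᵢ,t) has a point of sign change) if and only if α ∉ {1/n, 2/n, …, (n−1)/n}. Moreover, when k/n < α < (k+1)/n for some k ∈ {0,…,n−1}, the point of sign change equals the (k+1)-st order statistic x*_{k+1} of x₁,…,xₙ. -/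
/-!
For `0 ≤ α ≤ 1` each summand is squeezed between `α - [xᵢ ≤ t]` and `α - [xᵢ < t]`, so
`α n - #{i | xᵢ ≤ t} ≤ ∑ᵢ ψ(xᵢ, t) ≤ α n - #{i | xᵢ < t}`.
If `k < α n < k + 1`, then left of `x*ₖ₊₁` at most `k` points satisfy `xᵢ ≤ t`, and right of it
at least `k + 1` satisfy `xᵢ < t`, so `x*ₖ₊₁` is the point of sign change.
If instead `α = k / n`, the sum vanishes on `(0, 1)` for `k` zeros and `n - k` ones.
-/

open Set Finset

/-- The function `ψ` of the statement. -/
noncomputable def quantileScore (α x t : ℝ) : ℝ :=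
  if t < x then α else if x = t then 0 else α - 1

def IsSignChangePoint (g : ℝ → ℝ) (ϑ : ℝ) : Prop :=
  (∀ t, t < ϑ → 0 < g t) ∧ (∀ t, ϑ < t → g t < 0)

lemma not_isSignChangePoint_of_eqOn_zero {g : ℝ → ℝ} {a b : ℝ} (hab : a < b)
    (hg : EqOn g 0 (Ioo a b)) (ϑ : ℝ) : ¬ IsSignChangePoint g ϑ := by
  rintro ⟨hpos, hneg⟩
  obtain ⟨m, ham, hmb⟩ := exists_between hab
  rcases lt_or_ge m ϑ with hm | hm
  · simpa [hg ⟨ham, hmb⟩] using hpos m hm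
  · obtain ⟨t, hmt, htb⟩ := exists_between hmb
    simpa [hg ⟨ham.trans hmt, htb⟩] using hneg t (hm.trans_lt hmt)

lemma card_filter_comp_perm {β : Type*} {n : ℕ} (x : Fin n → β) (σ : Equiv.Perm (Fin n))
    (p : β → Prop) [DecidablePred p] : #{i | p (x i)} = #{j | p (x (σ j))} :=
  card_equiv σ.symm (by simp)

section OrderStatistic

variable {β : Type*} [LinearOrder β] {n : ℕ} {x : Fin n → β} {σ : Equiv.Perm (Fin n)}

lemma lt_card_filter_lt_iff (hσ : Monotone (x ∘ σ)) (k : Fin n) (t : β) :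
    k < #{i | x i < t} ↔ x (σ k) < t := by
  rw [card_filter_comp_perm x σ (· < t)]
  exact Fin.lt_card_filter_univ_iff_apply_of_imp _ fun i j hji hi => (hσ hji).trans_lt hi

lemma lt_card_filter_le_iff (hσ : Monotone (x ∘ σ)) (k : Fin n) (t : β) :
    k < #{i | x i ≤ t} ↔ x (σ k) ≤ t := by
  rw [card_filter_comp_perm x σ (· ≤ t)]
  exact Fin.lt_card_filter_univ_iff_apply_of_imp _ fun i j hji hi => (hσ hji).trans hi

end OrderStatistic

section QuantileScore

variable {ι : Type*} [Fintype ι] {α : ℝ}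

lemma sub_indicator_le_quantileScore (hα : α ≤ 1) (x t : ℝ) :
    α - (if x ≤ t then 1 else 0) ≤ quantileScore α x t := by
  unfold quantileScore
  split_ifs <;> linarith

lemma quantileScore_le_sub_indicator (hα : 0 ≤ α) (x t : ℝ) :
    quantileScore α x t ≤ α - (if x < t then 1 else 0) := by
  unfold quantileScore
  split_ifs <;> linarith

lemma quantileScore_of_ne {x t : ℝ} (h : x ≠ t) :
    quantileScore α x t = α - (if x < t then 1 else 0) := by
  rcases h.lt_or_gt with h' | h'
  · simp [quantileScore, h', h'.not_gt, h]
  · simp [quantileScore, h', h'.not_gt]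

lemma sum_sub_indicator (x : ι → ℝ) (p : ℝ → Prop) [DecidablePred p] :
    ∑ i, (α - if p (x i) then 1 else 0) = α * Fintype.card ι - #{i | p (x i)} := by
  rw [sum_sub_distrib, sum_boole, sum_const, card_univ, nsmul_eq_mul, mul_comm]

lemma mul_card_sub_card_le_sum_quantileScore (hα : α ≤ 1) (x : ι → ℝ) (t : ℝ) :
    α * Fintype.card ι - #{i | x i ≤ t} ≤ ∑ i, quantileScore α (x i) t := by
  rw [← sum_sub_indicator x (· ≤ t)]
  exact sum_le_sum fun i _ => sub_indicator_le_quantileScore hα (x i) t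

lemma sum_quantileScore_le_mul_card_sub_card (hα : 0 ≤ α) (x : ι → ℝ) (t : ℝ) :
    ∑ i, quantileScore α (x i) t ≤ α * Fintype.card ι - #{i | x i < t} := by
  rw [← sum_sub_indicator x (· < t)]
  exact sum_le_sum fun i _ => quantileScore_le_sub_indicator hα (x i) t

lemma sum_quantileScore_of_forall_ne {x : ι → ℝ} {t : ℝ} (h : ∀ i, x i ≠ t) :
    ∑ i, quantileScore α (x i) t = α * Fintype.card ι - #{i | x i < t} := by
  rw [← sum_sub_indicator x (· < t)]
  exact sum_congr rfl fun i _ => quantileScore_of_ne (h i)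

end QuantileScore

lemma isSignChangePoint_sum_quantileScore {α : ℝ} {n k : ℕ} (hk : k < n)
    (hα₀ : (k : ℝ) / n < α) (hα₁ : α < ((k : ℝ) + 1) / n) {x : Fin n → ℝ}
    {σ : Equiv.Perm (Fin n)} (hσ : Monotone (x ∘ σ)) :
    IsSignChangePoint (fun t => ∑ i, quantileScore α (x i) t) (x (σ ⟨k, hk⟩)) := by
  have hn : (0 : ℝ) < n := by exact_mod_cast hk.pos
  have hkn : (k : ℝ) < α * n := by rwa [div_lt_iff₀ hn] at hα₀
  have hkn' : α * n < k + 1 := by rwa [lt_div_iff₀ hn] at hα₁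
  have hk' : (k : ℝ) + 1 ≤ n := by exact_mod_cast hk
  have hα_nonneg : 0 ≤ α := by nlinarith [(k.cast_nonneg : (0 : ℝ) ≤ k)]
  have hα_le_one : α ≤ 1 := by nlinarith
  constructor
  · intro t ht
    have hcard : #{i | x i ≤ t} ≤ k := by
      simpa using (lt_card_filter_le_iff hσ ⟨k, hk⟩ t).not.mpr ht.not_ge
    have hcard' : (#{i | x i ≤ t} : ℝ) ≤ k := by exact_mod_cast hcard
    have hbound := mul_card_sub_card_le_sum_quantileScore hα_le_one x t
    rw [Fintype.card_fin] at hbound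
    linarith
  · intro t ht
    have hcard : k < #{i | x i < t} := (lt_card_filter_lt_iff hσ ⟨k, hk⟩ t).mpr ht
    have hcard' : (k : ℝ) + 1 ≤ #{i | x i < t} := by exact_mod_cast hcard
    have hbound := sum_quantileScore_le_mul_card_sub_card hα_nonneg x t
    rw [Fintype.card_fin] at hbound
    linarith

lemma exists_div_lt_lt_succ_div {α : ℝ} (hα : α ∈ Ioo (0 : ℝ) 1) {n : ℕ} (hn : 0 < n)
    (h : ∀ k : ℕ, 1 ≤ k → k ≤ n - 1 → α ≠ (k : ℝ) / n) :
    ∃ k < n, (k : ℝ) / n < α ∧ α < ((k : ℝ) + 1) / n := by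
  have hn' : (0 : ℝ) < n := by exact_mod_cast hn
  have hnα : 0 ≤ α * n := by nlinarith [hα.1]
  have hlt : ⌊α * n⌋₊ < n := by rw [Nat.floor_lt hnα]; nlinarith [hα.2]
  refine ⟨⌊α * n⌋₊, hlt, ?_, ?_⟩
  · rw [div_lt_iff₀ hn']
    refine (Nat.floor_le hnα).lt_of_ne fun heq => ?_
    rcases Nat.eq_zero_or_pos ⌊α * n⌋₊ with hzero | hpos
    · rw [hzero, Nat.cast_zero] at heq
      nlinarith [hα.1]
    · exact h _ hpos (by omega) (by rw [eq_div_iff hn'.ne', heq])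
  · rw [lt_div_iff₀ hn']
    exact Nat.lt_floor_add_one _

lemma not_isSignChangePoint_sum_quantileScore_of_eq_div {α : ℝ} {n k : ℕ} (hk : k ≤ n)
    (hα : α = (k : ℝ) / n) (ϑ : ℝ) :
    ¬ IsSignChangePoint
      (fun t => ∑ i : Fin n, quantileScore α (if (i : ℕ) < k then 0 else 1) t) ϑ := by
  refine not_isSignChangePoint_of_eqOn_zero zero_lt_one (fun t ht => ?_) ϑ
  have hne : ∀ i : Fin n, (if (i : ℕ) < k then (0 : ℝ) else 1) ≠ t := by
    intro i; split_ifs <;> linarith [ht.1, ht.2]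
  have hcard : #{i : Fin n | (if (i : ℕ) < k then (0 : ℝ) else 1) < t} = k := by
    calc _ = #{i : Fin n | (i : ℕ) < k} := by
          congr 1
          ext i
          by_cases hi : (i : ℕ) < k <;> simp [hi, ht.1, ht.2.not_gt]
      _ = k := by rw [Fin.card_filter_val_lt, min_eq_right hk]
  rw [Pi.zero_apply, sum_quantileScore_of_forall_ne hne, hcard, Fintype.card_fin, hα]
  obtain rfl | hn := Nat.eq_zero_or_pos n
  · simp [Nat.le_zero.1 hk]
  · rw [div_mul_cancel₀ _ (by positivity), sub_self]

theorem stmt17 (α : ℝ) (hα : α ∈ Set.Ioo (0 : ℝ) 1)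
    (ψ : ℝ → ℝ → ℝ)
    (hψ : ∀ x t : ℝ, ψ x t = if t < x then α else if x = t then 0 else α - 1)
    (n : ℕ) (hn : 2 ≤ n) :
    ((∀ x : Fin n → ℝ, ∃ ϑ : ℝ,
        (∀ t, t < ϑ → 0 < ∑ i, ψ (x i) t) ∧ (∀ t, ϑ < t → ∑ i, ψ (x i) t < 0)) ↔
      ∀ k : ℕ, 1 ≤ k → k ≤ n - 1 → α ≠ (k : ℝ) / n) ∧
    (∀ k : ℕ, ∀ hk : k < n, (k : ℝ) / n < α → α < ((k : ℝ) + 1) / n →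
      ∀ x : Fin n → ℝ, ∀ σ : Equiv.Perm (Fin n), Monotone (x ∘ σ) →
        (∀ t, t < x (σ ⟨k, hk⟩) → 0 < ∑ i, ψ (x i) t) ∧
        (∀ t, x (σ ⟨k, hk⟩) < t → ∑ i, ψ (x i) t < 0)) := by
  obtain rfl : ψ = quantileScore α := funext₂ hψ
  refine ⟨⟨fun hT k hk₁ hk₂ heq => ?_, fun h x => ?_⟩,
    fun k hk h₀ h₁ x σ hσ => isSignChangePoint_sum_quantileScore hk h₀ h₁ hσ⟩
  · obtain ⟨ϑ, hϑ⟩ := hT (fun i => if (i : ℕ) < k then 0 else 1)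
    exact not_isSignChangePoint_sum_quantileScore_of_eq_div (by omega) heq ϑ hϑ
  · obtain ⟨k, hk, h₀, h₁⟩ := exists_div_lt_lt_succ_div hα (by omega) h
    exact ⟨_, isSignChangePoint_sum_quantileScore hk h₀ h₁ (Tuple.monotone_sort x)⟩
end

section
/- Let f : ℝ₊ → ℝ₊ be a function with f(0) = 0 and define ψ : ℝ × ℝ → ℝ by ψ(x,t) := sign(x − t)·f(|x − t|). Assume f(z) > 0 for all z > 0 (so ψ is a T₁-function with ϑ₁(x) = x). Then ψ is a Tₙ^{λ}-function for every n ∈ ℕ and every λ ∈ Λₙ if and only if f is strictly increasing on ℝ₊. -/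
/-!
Write `ψ x t = g (x - t)`, where `g u = sign u * f |u|` is the odd extension of `f`.
If `f` is strictly increasing, so is `g`, hence every weighted sum `t ↦ ∑ λᵢ g (xᵢ - t)` is
strictly decreasing; it is positive to the left of all `xᵢ` and negative to the right of them, so
it changes sign exactly once. Conversely, if `a < b` but `f b ≤ f a`, then
`t ↦ g (-t) + g (a + b - t)` equals `f b - f a ≤ 0` at `t = a` and `f a - f b ≥ 0` at `t = b`,
so its sign change point would lie both at or left of `a` and at or right of `b`.
-/

open Set

def HasSignChange {α β : Type*} [Preorder α] [Preorder β] [Zero β] (S : α → β) : Prop :=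
  ∃ ϑ, (∀ t, t < ϑ → 0 < S t) ∧ (∀ t, ϑ < t → S t < 0)

section SignChange

variable {α β : Type*}

theorem HasSignChange.le_of_nonpos_of_nonneg [LinearOrder α] [LinearOrder β] [Zero β]
    {S : α → β} (h : HasSignChange S) {a b : α} (ha : S a ≤ 0) (hb : 0 ≤ S b) : b ≤ a := by
  obtain ⟨ϑ, hlt, hgt⟩ := h
  have hϑa : ϑ ≤ a := not_lt.1 fun h => (hlt a h).not_ge ha
  have hbϑ : b ≤ ϑ := not_lt.1 fun h => (hgt b h).not_ge hb
  exact hbϑ.trans hϑa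

theorem StrictAnti.hasSignChange [ConditionallyCompleteLinearOrder α] [DenselyOrdered α]
    [LinearOrder β] [Zero β] {S : α → β} (hS : StrictAnti S) (hpos : ∃ a, 0 < S a)
    (hneg : ∃ b, S b < 0) : HasSignChange S := by
  obtain ⟨b, hb⟩ := hneg
  set T := {t | 0 < S t}
  have hT : BddAbove T := ⟨b, fun t ht => le_of_lt <| hS.lt_iff_gt.1 (hb.trans ht)⟩
  refine ⟨sSup T, fun t ht => ?_, fun t ht => ?_⟩
  · obtain ⟨s, hs, hts⟩ := exists_lt_of_lt_csSup hpos ht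
    exact lt_trans (a := 0) hs (hS hts)
  · obtain ⟨s, hTs, hst⟩ := exists_between ht
    have hs : S s ≤ 0 := not_lt.1 fun hs => (le_csSup hT hs).not_gt hTs
    exact (hS hst).trans_le hs

end SignChange

theorem sum_mul_pos_of_ne_zero {ι R : Type*} [Fintype ι] [Semiring R] [PartialOrder R]
    [IsStrictOrderedRing R] {c φ : ι → R} (hc : ∀ i, 0 ≤ c i) (hc0 : c ≠ 0)
    (hφ : ∀ i, 0 < φ i) : 0 < ∑ i, c i * φ i := by
  obtain ⟨j, hj⟩ := Function.ne_iff.1 hc0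
  exact Finset.sum_pos' (fun i _ => mul_nonneg (hc i) (hφ i).le)
    ⟨j, Finset.mem_univ j, mul_pos ((hc j).lt_of_ne' hj) (hφ j)⟩

noncomputable def oddExtension (f : ℝ → ℝ) (u : ℝ) : ℝ :=
  Real.sign u * f |u|

namespace OddExtension

variable {f : ℝ → ℝ}

theorem apply_of_nonneg (hf0 : f 0 = 0) {u : ℝ} (hu : 0 ≤ u) : oddExtension f u = f u := by
  rcases hu.eq_or_lt with rfl | hu
  · simp [oddExtension, hf0]
  · simp [oddExtension, Real.sign_of_pos hu, abs_of_pos hu]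

theorem neg (u : ℝ) : oddExtension f (-u) = -oddExtension f u := by
  simp [oddExtension, Real.sign_neg]

theorem zero : oddExtension f 0 = 0 := by
  simp [oddExtension]

theorem strictMono (hf0 : f 0 = 0) (hf : StrictMonoOn f (Ici 0)) :
    StrictMono (oddExtension f) :=
  strictMono_of_odd_strictMonoOn_nonneg neg
    (hf.congr fun _ hu => (apply_of_nonneg hf0 hu).symm)

end OddExtension

theorem hasSignChange_sum_mul_oddExtension {ι : Type*} [Fintype ι] {f : ℝ → ℝ}
    (hf0 : f 0 = 0) (hf : StrictMonoOn f (Ici 0)) (x c : ι → ℝ) (hc : ∀ i, 0 ≤ c i)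
    (hc0 : c ≠ 0) : HasSignChange fun t => ∑ i, c i * oddExtension f (x i - t) := by
  have hg := OddExtension.strictMono hf0 hf
  have hg_pos : ∀ {u}, 0 < u → 0 < oddExtension f u := fun hu =>
    OddExtension.zero (f := f) ▸ hg hu
  refine StrictAnti.hasSignChange (fun s t hst => ?_) ?_ ?_
  · have := sum_mul_pos_of_ne_zero hc hc0
      (φ := fun i => oddExtension f (x i - s) - oddExtension f (x i - t))
      fun i => sub_pos.2 (hg (by linarith))
    simpa [mul_sub, Finset.sum_sub_distrib] using this
  · obtain ⟨m, hm⟩ := (finite_range x).bddBelow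
    refine ⟨m - 1, sum_mul_pos_of_ne_zero hc hc0 fun i => hg_pos ?_⟩
    linarith [hm (mem_range_self i)]
  · obtain ⟨M, hM⟩ := (finite_range x).bddAbove
    refine ⟨M + 1, ?_⟩
    have := sum_mul_pos_of_ne_zero hc hc0 (φ := fun i => -oddExtension f (x i - (M + 1)))
      fun i => neg_pos.2 ?_
    · simpa using this
    · rw [← neg_pos, ← OddExtension.neg]
      exact hg_pos (by linarith [hM (mem_range_self i)])

theorem strictMonoOn_of_hasSignChange_oddExtension {f : ℝ → ℝ} (hf0 : f 0 = 0)
    (h : ∀ y, HasSignChange fun t => oddExtension f (-t) + oddExtension f (y - t)) :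
    StrictMonoOn f (Ici 0) := by
  intro a ha b hb hab
  by_contra hba
  have hg : ∀ {u}, 0 ≤ u → oddExtension f u = f u := OddExtension.apply_of_nonneg hf0
  have hg' : ∀ {u}, 0 ≤ u → oddExtension f (-u) = -f u := fun hu => by
    rw [OddExtension.neg, hg hu]
  refine hab.not_ge <| (h (a + b)).le_of_nonpos_of_nonneg (a := a) (b := b) ?_ ?_
  · rw [hg' ha, add_sub_cancel_left, hg hb]
    linarith [not_lt.1 hba]
  · rw [hg' hb, add_sub_cancel_right, hg ha]
    linarith [not_lt.1 hba]

theorem stmt18_general (f : ℝ → ℝ) (hf0 : f 0 = 0)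
    (ψ : ℝ → ℝ → ℝ) (hψ : ∀ x t : ℝ, ψ x t = Real.sign (x - t) * f |x - t|) :
    (∀ n : ℕ, 1 ≤ n → ∀ x : Fin n → ℝ, ∀ c : Fin n → ℝ, (∀ i, 0 ≤ c i) → c ≠ 0 →
        ∃ ϑ : ℝ, (∀ t, t < ϑ → 0 < ∑ i, c i * ψ (x i) t) ∧
                 (∀ t, ϑ < t → ∑ i, c i * ψ (x i) t < 0)) ↔
      StrictMonoOn f (Set.Ici 0) := by
  obtain rfl : ψ = fun x t => oddExtension f (x - t) := funext₂ hψ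
  constructor
  · intro h
    refine strictMonoOn_of_hasSignChange_oddExtension hf0 fun y => ?_
    simpa [HasSignChange, Fin.sum_univ_two] using h 2 one_le_two ![0, y] ![1, 1]
      (fun i => by fin_cases i <;> norm_num) (by simp [funext_iff, Fin.forall_fin_two])
  · intro hf n _ x c hc hc0
    exact hasSignChange_sum_mul_oddExtension hf0 hf x c hc hc0

theorem stmt18 (f : ℝ → ℝ) (hf0 : f 0 = 0)
    (hnn : ∀ z : ℝ, 0 ≤ z → 0 ≤ f z) (hpos : ∀ z : ℝ, 0 < z → 0 < f z)
    (ψ : ℝ → ℝ → ℝ) (hψ : ∀ x t : ℝ, ψ x t = Real.sign (x - t) * f |x - t|) :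
    (∀ n : ℕ, 1 ≤ n → ∀ x : Fin n → ℝ, ∀ c : Fin n → ℝ, (∀ i, 0 ≤ c i) → c ≠ 0 →
        ∃ ϑ : ℝ, (∀ t, t < ϑ → 0 < ∑ i, c i * ψ (x i) t) ∧
                 (∀ t, ϑ < t → ∑ i, c i * ψ (x i) t < 0)) ↔
      StrictMonoOn f (Set.Ici 0) :=
  stmt18_general f hf0 ψ hψ
end
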